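/- arXiv:1601.05638 — 2 statements merged into one kernel-verified Lean document; each statement's English description precedes it below -/
import Mathlib

section
/- Let s : ℕ → ℕ be a sequence of positive integers with s_L → ∞ and s_L/L → 0 as L → ∞. Then there exist a constant A > 0 and an integer L₀ such that for all integers L ≥ L₀, all integers N with Δ = L/N ∈ (0, 1/2], and all Ω, Ω' ∈ 𝒟_L = [−(1−s_L/L), 1−s_L/L], the quantity I₂(Ω,Ω') = ∑_{k=L+1}^{N−L−1} f_{L,Δ}(k/L − Ω) · conj(f_{L,Δ}(k/L − Ω')) satisfies s_L · |I₂(Ω,Ω')| < A (the sum is empty, hence I₂ = 0, when N = 2L). -/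
open Complex Finset Filter

/-- `f_{L,Δ}(Ω) = (Δ/L) ∑_{n=0}^{N-1} exp(-2π i n Δ Ω)` with `Δ = L/N`. -/
noncomputable def fLD (L N : ℕ) (Ω : ℝ) : ℂ :=
  (((((L : ℝ) / N) / L) : ℝ) : ℂ) *
    ∑ n ∈ Finset.range N,
      Complex.exp ((-2 : ℂ) * (Real.pi : ℂ) * Complex.I * (n : ℂ) *
        (((L : ℝ) / N : ℝ) : ℂ) * (Ω : ℂ))

/-!
With `t = L x / N`, `fLD L N x = N⁻¹ ∑_{n<N} e^{-2πi n t}` is a normalised Dirichlet kernel, so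
`‖fLD L N x‖ ≤ 1 / (N sin πt) ≤ 1 / (2 N min(t, 1 - t))` by Jordan's inequality. For `L < k < N - L`
and `Ω ∈ 𝒟_L` one has `N t = k - LΩ ∈ [k - L + s, k + L - s]`, so both factors of the `k`-th term
of `I₂` are at most `1 / (2 min(a_k, b_k))` with `a_k = k - L + s`, `b_k = N - L - k + s`. Bounding
`min(a, b)⁻² ≤ a⁻² + b⁻²` and comparing with `∑_{j > s} j⁻² ≤ 2 / (s + 1)` gives
`‖I₂‖ ≤ 1 / (s + 1)`, hence `s ‖I₂‖ < 1`, uniformly in `L`, `N`, `Ω`, `Ω'`.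
-/

lemma norm_geom_sum_le_of_norm_le_one {𝕜 : Type*} [NormedDivisionRing 𝕜] {z : 𝕜}
    (hz : ‖z‖ ≤ 1) (hz1 : z ≠ 1) (N : ℕ) :
    ‖∑ n ∈ range N, z ^ n‖ ≤ 2 / ‖z - 1‖ := by
  rw [geom_sum_eq hz1, norm_div]
  gcongr
  calc ‖z ^ N - 1‖ ≤ ‖z‖ ^ N + ‖(1 : 𝕜)‖ := by grw [norm_sub_le, norm_pow]
    _ ≤ 2 := by grw [hz, norm_one]; norm_num

lemma norm_sum_exp_I_mul_pow_le {θ : ℝ} (h : Real.sin (θ / 2) ≠ 0) (N : ℕ) :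
    ‖∑ n ∈ range N, exp (I * θ) ^ n‖ ≤ 1 / |Real.sin (θ / 2)| := by
  have hnorm : ‖exp (I * θ) - 1‖ = 2 * |Real.sin (θ / 2)| := by
    rw [norm_exp_I_mul_ofReal_sub_one, norm_mul, Real.norm_two, Real.norm_eq_abs]
  have hne : exp (I * θ) ≠ 1 := by
    intro h1
    simp [h1, h] at hnorm
  calc _ ≤ 2 / ‖exp (I * θ) - 1‖ :=
        norm_geom_sum_le_of_norm_le_one (norm_exp_I_mul_ofReal θ).le hne N
    _ = 1 / |Real.sin (θ / 2)| := by
        rw [hnorm]; field_simp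

lemma two_mul_min_le_sin_pi_mul {t : ℝ} (h0 : 0 ≤ t) (h1 : t ≤ 1) :
    2 * min t (1 - t) ≤ Real.sin (Real.pi * t) := by
  have jordan : ∀ u, 0 ≤ u → u ≤ 1 / 2 → 2 * u ≤ Real.sin (Real.pi * u) := fun u hu0 hu1 => by
    have := Real.mul_le_sin (x := Real.pi * u) (by positivity) (by nlinarith [Real.pi_pos])
    rwa [← mul_assoc, div_mul_cancel₀ _ Real.pi_ne_zero] at this
  rcases le_total t (1 / 2) with ht | ht
  · grw [min_le_left]; exact jordan t h0 ht
  · grw [min_le_right]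
    rw [← Real.sin_pi_sub, show Real.pi - Real.pi * t = Real.pi * (1 - t) by ring]
    exact jordan (1 - t) (by linarith) (by linarith)

lemma norm_fLD_le {L N : ℕ} {x a : ℝ} (ha : 0 < a) (h₁ : a ≤ L * x) (h₂ : a ≤ N - L * x) :
    ‖fLD L N x‖ ≤ 1 / (2 * a) := by
  have hN : (0 : ℝ) < N := by linarith
  have hL : (L : ℝ) ≠ 0 := by rintro h; simp [h] at h₁; linarith
  set t := L * x / N with ht
  have hat : a ≤ N * t := by rw [ht, mul_div_cancel₀ _ hN.ne']; exact h₁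
  have hat' : a ≤ N * (1 - t) := by rw [ht, mul_sub, mul_div_cancel₀ _ hN.ne']; linarith
  have hsin : 2 * a / N ≤ Real.sin (Real.pi * t) := by
    have := two_mul_min_le_sin_pi_mul (t := t) (by nlinarith) (by nlinarith)
    refine le_trans ?_ this
    rw [div_le_iff₀ hN]
    rcases min_choice t (1 - t) with h | h <;> rw [h] <;> linarith
  have hsum : ∑ n ∈ range N, exp ((-2 : ℂ) * Real.pi * I * n * ((L / N : ℝ) : ℂ) * x)
      = ∑ n ∈ range N, exp (I * ((-2 * Real.pi * t : ℝ) : ℂ)) ^ n := by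
    refine sum_congr rfl fun n _ => ?_
    rw [← exp_nat_mul, ht]
    push_cast
    ring_nf
  have hhalf : Real.sin (-2 * Real.pi * t / 2) = -Real.sin (Real.pi * t) := by
    rw [← Real.sin_neg]; ring_nf
  have hsinpos : 0 < Real.sin (Real.pi * t) := by
    have : 0 < 2 * a / N := by positivity
    linarith
  have hcoef : ‖((((L : ℝ) / N) / L : ℝ) : ℂ)‖ = 1 / N := by
    rw [norm_real, Real.norm_eq_abs, div_div_cancel_left' hL, one_div, abs_of_pos (by positivity)]
  rw [fLD, norm_mul, hcoef, hsum]
  calc 1 / (N : ℝ) * ‖∑ n ∈ range N, exp (I * ((-2 * Real.pi * t : ℝ) : ℂ)) ^ n‖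
      ≤ 1 / N * (1 / Real.sin (Real.pi * t)) := by
        gcongr
        have hne : Real.sin (-2 * Real.pi * t / 2) ≠ 0 := by
          rw [hhalf]; exact neg_ne_zero.2 hsinpos.ne'
        refine (norm_sum_exp_I_mul_pow_le hne N).trans ?_
        rw [hhalf, abs_neg, abs_of_pos hsinpos]
    _ ≤ 1 / N * (1 / (2 * a / N)) := by gcongr
    _ = 1 / (2 * a) := by field_simp

lemma norm_fLD_sub_le {L N s k : ℕ} {Ω : ℝ} (hL : 0 < L) (hk : k ∈ Ioo L (N - L))
    (hΩ : Ω ∈ Set.Icc (-(1 - (s : ℝ) / L)) (1 - (s : ℝ) / L)) :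
    ‖fLD L N (k / L - Ω)‖ ≤ 1 / (2 * min ((k - L + s : ℕ) : ℝ) ((N - L - k + s : ℕ) : ℝ)) := by
  rw [mem_Ioo] at hk
  have hLR : (0 : ℝ) < L := Nat.cast_pos.2 hL
  have hLΩ : |L * Ω| ≤ L - s := by
    have h₁ := mul_le_mul_of_nonneg_left hΩ.1 hLR.le
    have h₂ := mul_le_mul_of_nonneg_left hΩ.2 hLR.le
    have hs : (L : ℝ) * (s / L) = s := mul_div_cancel₀ _ hLR.ne'
    rw [abs_le]
    constructor <;> linarith
  rw [abs_le] at hLΩ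
  have hx : (L : ℝ) * (k / L - Ω) = k - L * Ω := by field_simp
  have hkN : (k : ℝ) + L + 1 ≤ N := by exact_mod_cast (by omega : k + L + 1 ≤ N)
  have hkL : (L : ℝ) + 1 ≤ k := by exact_mod_cast hk.1
  rw [Nat.cast_add, Nat.cast_sub hk.1.le, Nat.cast_add, Nat.cast_sub (by omega),
    Nat.cast_sub (by omega)]
  apply norm_fLD_le (lt_min (by linarith) (by linarith)) <;> rw [hx]
  · exact (min_le_left _ _).trans (by linarith)
  · exact (min_le_right _ _).trans (by linarith)

lemma inv_sq_min_le_add {α : Type*} [Field α] [LinearOrder α] [IsStrictOrderedRing α] (a b : α) :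
    (min a b ^ 2)⁻¹ ≤ (a ^ 2)⁻¹ + (b ^ 2)⁻¹ := by
  rcases min_choice a b with h | h <;> rw [h]
  · exact le_add_of_nonneg_right (by positivity)
  · exact le_add_of_nonneg_left (by positivity)

lemma sum_inv_sq_le_of_injOn {α ι : Type*} [Field α] [LinearOrder α] [IsStrictOrderedRing α]
    {S : Finset ι} {e : ι → ℕ} {s : ℕ} (hinj : Set.InjOn e S) (hs : ∀ i ∈ S, s < e i) :
    ∑ i ∈ S, ((e i : α) ^ 2)⁻¹ ≤ 2 / (s + 1) := by
  rw [← sum_image (f := fun j : ℕ => ((j : α) ^ 2)⁻¹) hinj]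
  refine le_trans ?_ (sum_Ioo_inv_sq_le s ((S.image e).sup id + 1))
  refine sum_le_sum_of_subset_of_nonneg (fun j hj => ?_) fun _ _ _ => by positivity
  obtain ⟨i, hi, rfl⟩ := mem_image.1 hj
  exact mem_Ioo.2 ⟨hs i hi, Nat.lt_succ_of_le (le_sup (f := id) hj)⟩

lemma norm_fLD_mul_conj_fLD_le {L N s k : ℕ} {Ω Ω' : ℝ} (hL : 0 < L) (hk : k ∈ Ioo L (N - L))
    (hΩ : Ω ∈ Set.Icc (-(1 - (s : ℝ) / L)) (1 - (s : ℝ) / L))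
    (hΩ' : Ω' ∈ Set.Icc (-(1 - (s : ℝ) / L)) (1 - (s : ℝ) / L)) :
    ‖fLD L N (k / L - Ω) * starRingEnd ℂ (fLD L N (k / L - Ω'))‖ ≤
      (1 / 4) * ((((k - L + s : ℕ) : ℝ) ^ 2)⁻¹ + (((N - L - k + s : ℕ) : ℝ) ^ 2)⁻¹) := by
  set m := min ((k - L + s : ℕ) : ℝ) ((N - L - k + s : ℕ) : ℝ)
  rw [norm_mul, norm_conj]
  calc _ ≤ 1 / (2 * m) * (1 / (2 * m)) := by
        gcongr
        · exact norm_fLD_sub_le hL hk hΩ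
        · exact norm_fLD_sub_le hL hk hΩ'
    _ = 1 / 4 * (m ^ 2)⁻¹ := by ring
    _ ≤ _ := by grw [inv_sq_min_le_add]

noncomputable def I2 (L N : ℕ) (Ω Ω' : ℝ) : ℂ :=
  ∑ k ∈ Ioo L (N - L), fLD L N ((k : ℝ) / L - Ω) * starRingEnd ℂ (fLD L N ((k : ℝ) / L - Ω'))

lemma norm_I2_le {L N s : ℕ} {Ω Ω' : ℝ} (hL : 0 < L)
    (hΩ : Ω ∈ Set.Icc (-(1 - (s : ℝ) / L)) (1 - (s : ℝ) / L))
    (hΩ' : Ω' ∈ Set.Icc (-(1 - (s : ℝ) / L)) (1 - (s : ℝ) / L)) :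
    ‖I2 L N Ω Ω'‖ ≤ 1 / (s + 1) := by
  have hu : ∑ k ∈ Ioo L (N - L), (((k - L + s : ℕ) : ℝ) ^ 2)⁻¹ ≤ 2 / (s + 1) :=
    sum_inv_sq_le_of_injOn
      (fun i hi j hj h => by simp only [coe_Ioo, Set.mem_Ioo] at hi hj h; omega)
      fun k hk => by rw [mem_Ioo] at hk; omega
  have hv : ∑ k ∈ Ioo L (N - L), (((N - L - k + s : ℕ) : ℝ) ^ 2)⁻¹ ≤ 2 / (s + 1) :=
    sum_inv_sq_le_of_injOn
      (fun i hi j hj h => by simp only [coe_Ioo, Set.mem_Ioo] at hi hj h; omega)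
      fun k hk => by rw [mem_Ioo] at hk; omega
  calc ‖I2 L N Ω Ω'‖
      ≤ ∑ k ∈ Ioo L (N - L),
          (1 / 4) * ((((k - L + s : ℕ) : ℝ) ^ 2)⁻¹ + (((N - L - k + s : ℕ) : ℝ) ^ 2)⁻¹) :=
        norm_sum_le_of_le _ fun k hk => norm_fLD_mul_conj_fLD_le hL hk hΩ hΩ'
    _ ≤ (1 / 4) * (2 / (s + 1) + 2 / (s + 1)) := by
        rw [← mul_sum, sum_add_distrib]; gcongr
    _ = 1 / (s + 1) := by ring

theorem I2_bound_general (s : ℕ → ℕ) :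
    ∃ A > (0 : ℝ), ∃ L₀ : ℕ, ∀ L : ℕ, L₀ ≤ L → ∀ N : ℕ,
      0 < (L : ℝ) / N → (L : ℝ) / N ≤ 1 / 2 →
      ∀ Ω ∈ Set.Icc (-(1 - (s L : ℝ) / L)) (1 - (s L : ℝ) / L),
      ∀ Ω' ∈ Set.Icc (-(1 - (s L : ℝ) / L)) (1 - (s L : ℝ) / L),
      (s L : ℝ) * ‖∑ k ∈ Finset.Ioo L (N - L),
          fLD L N ((k : ℝ) / L - Ω) * (starRingEnd ℂ) (fLD L N ((k : ℝ) / L - Ω'))‖ < A := by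
  refine ⟨1, one_pos, 0, fun L _ N hΔ _ Ω hΩ Ω' hΩ' => ?_⟩
  have hL : 0 < L := Nat.pos_of_ne_zero fun h => by simp [h] at hΔ
  change (s L : ℝ) * ‖I2 L N Ω Ω'‖ < 1
  calc (s L : ℝ) * ‖I2 L N Ω Ω'‖ ≤ s L * (1 / (s L + 1)) := by
        grw [norm_I2_le hL hΩ hΩ']
    _ < 1 := by rw [mul_one_div, div_lt_one (by positivity)]; linarith

/-- If `s : ℕ → ℕ` is a sequence of positive integers with
`s L → ∞` and `s L / L → 0`, then there exist `A > 0` and `L₀` such that for all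
`L ≥ L₀`, all `N` with `Δ = L/N ∈ (0, 1/2]`, and all `Ω, Ω'` in the restricted
interval `𝒟_L = [-(1 - s L / L), 1 - s L / L]`, the quantity
`I₂(Ω,Ω') = ∑_{k=L+1}^{N-L-1} f_{L,Δ}(k/L - Ω) conj(f_{L,Δ}(k/L - Ω'))`
satisfies `s L * |I₂(Ω,Ω')| < A`. -/
theorem I2_bound (s : ℕ → ℕ) (hpos : ∀ L, 0 < s L)
    (hs1 : Tendsto (fun L => (s L : ℝ)) atTop atTop)
    (hs2 : Tendsto (fun L => (s L : ℝ) / L) atTop (nhds 0)) :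
    ∃ A > (0 : ℝ), ∃ L₀ : ℕ, ∀ L : ℕ, L₀ ≤ L → ∀ N : ℕ,
      0 < (L : ℝ) / N → (L : ℝ) / N ≤ 1 / 2 →
      ∀ Ω ∈ Set.Icc (-(1 - (s L : ℝ) / L)) (1 - (s L : ℝ) / L),
      ∀ Ω' ∈ Set.Icc (-(1 - (s L : ℝ) / L)) (1 - (s L : ℝ) / L),
      (s L : ℝ) * ‖∑ k ∈ Finset.Ioo L (N - L),
          fLD L N ((k : ℝ) / L - Ω) * (starRingEnd ℂ) (fLD L N ((k : ℝ) / L - Ω'))‖ < A :=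
  I2_bound_general s
end

section
/- There exists a constant A > 0 such that for all positive integers L and N with Δ = L/N ∈ (0, 1/2], every integer k with 0 ≤ k ≤ L, and every Ω ∈ [−1, 1] with |k − LΩ| < 2L: |f_{L,1/2}(k/L − Ω) − f_{L,Δ}(k/L − Ω)|² < 1/(4L²) + A/(2L − |k − LΩ|)². -/
/-
Both array factors are normalized geometric sums `M⁻¹ ∑_{n<M} e^{-inθ}` with the same total phase
`Mθ = 2πLx`, where `x = k/L - Ω`. Each therefore equals `(1 - e^{-iMθ}) (1/(iMθ) + g(θ)/M)` with
`g(θ) = 1/(1 - e^{-iθ}) - 1/(iθ)`. In the difference the sinc terms `1/(iMθ)` cancel, leaving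
`(1 - e^{-iMθ}) (g(θ₁)/(2L) - g(θ₂)/N)`. Since `|e^{-iθ} - 1 + iθ| = O(θ²)` and Jordan's inequality
gives `|1 - e^{-iθ}| ≥ |θ| (2π - |θ|) / π²`, we get `|g(θ)| ≤ 2π² / (2π - |θ|)`. With
`|θ₁|, |θ₂| ≤ π|x|` and `N ≥ 2L` the difference is at most `4π / (2L - |k - LΩ|)`, so `A = 16π²`.
-/

open Complex Finset

/-- `f_{L,1/2}(Ω) = (1/(2L)) ∑_{n=0}^{2L-1} exp(-π i n Ω)`, the critically spaced
case `Δ = 1/2` with `2L` antennas. -/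
noncomputable def fHalf (L : ℕ) (Ω : ℝ) : ℂ :=
  ((1 / (2 * (L : ℝ)) : ℝ) : ℂ) *
    ∑ n ∈ Finset.range (2 * L),
      Complex.exp (-(Real.pi : ℂ) * Complex.I * (n : ℂ) * (Ω : ℂ))

namespace ArrayFactor

open scoped Real

lemma two_mul_abs_mul_pi_sub_abs_div_sq_le_abs_sin {t : ℝ} (ht : |t| ≤ π) :
    2 * |t| * (π - |t|) / π ^ 2 ≤ |Real.sin t| := by
  suffices key : ∀ s, 0 ≤ s → s ≤ π → 2 * s * (π - s) / π ^ 2 ≤ Real.sin s by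
    rcases le_total 0 t with h | h
    · rw [abs_of_nonneg h] at ht ⊢
      exact (key t h ht).trans (le_abs_self _)
    · rw [abs_of_nonpos h] at ht ⊢
      rw [← abs_neg, ← Real.sin_neg]
      exact (key (-t) (by linarith) ht).trans (le_abs_self _)
  intro s hs0 hsπ
  have hπ := Real.pi_pos
  rcases le_total s (π / 2) with h | h
  · calc 2 * s * (π - s) / π ^ 2 ≤ 2 / π * s := by
          rw [div_le_iff₀ (by positivity)]; field_simp; nlinarith
      _ ≤ Real.sin s := Real.mul_le_sin hs0 h
  · calc 2 * s * (π - s) / π ^ 2 ≤ 2 / π * (π - s) := by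
          rw [div_le_iff₀ (by positivity)]; field_simp; nlinarith
      _ ≤ Real.sin s := by
          rw [← Real.sin_pi_sub]; exact Real.mul_le_sin (by linarith) (by linarith)

lemma abs_mul_two_pi_sub_abs_div_sq_le_norm_one_sub_exp {θ : ℝ} (hθ : |θ| ≤ 2 * π) :
    |θ| * (2 * π - |θ|) / π ^ 2 ≤ ‖1 - exp (-θ * I)‖ := by
  have h : ‖1 - exp (-θ * I)‖ = 2 * |Real.sin (-θ / 2)| := by
    rw [norm_sub_rev, show -(θ : ℂ) * I = I * ((-θ : ℝ) : ℂ) by push_cast; ring,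
      norm_exp_I_mul_ofReal_sub_one, norm_mul, Real.norm_eq_abs, Real.norm_eq_abs, abs_two]
  have hhalf : |-θ / 2| = |θ| / 2 := by rw [abs_div, abs_neg, abs_two]
  have := two_mul_abs_mul_pi_sub_abs_div_sq_le_abs_sin (t := -θ / 2) (by rw [hhalf]; linarith)
  rw [hhalf] at this
  rw [h]
  calc |θ| * (2 * π - |θ|) / π ^ 2 = 2 * (2 * (|θ| / 2) * (π - |θ| / 2) / π ^ 2) := by ring
    _ ≤ 2 * |Real.sin (-θ / 2)| := by gcongr

lemma exp_neg_mul_I_ne_one {θ : ℝ} (hθ₀ : θ ≠ 0) (hθ : |θ| < 2 * π) : exp (-θ * I) ≠ 1 := by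
  intro h
  have hlow := abs_mul_two_pi_sub_abs_div_sq_le_norm_one_sub_exp hθ.le
  rw [h, sub_self, norm_zero] at hlow
  have hpos : 0 < |θ| * (2 * π - |θ|) / π ^ 2 :=
    div_pos (mul_pos (abs_pos.2 hθ₀) (by linarith)) (by positivity)
  linarith

lemma norm_exp_neg_mul_I_sub_one_add_le (θ : ℝ) :
    ‖exp (-θ * I) - 1 + θ * I‖ ≤ θ ^ 2 / 2 + |θ| ^ 3 / 6 := by
  have h : exp (-θ * I) - 1 + θ * I = ((Real.cos θ - 1 : ℝ) : ℂ) + ((θ - Real.sin θ : ℝ) : ℂ) * I := by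
    rw [show -(θ : ℂ) * I = ((-θ : ℝ) : ℂ) * I by push_cast; ring, exp_mul_I]
    push_cast
    rw [Complex.cos_neg, Complex.sin_neg]
    ring
  rw [h]
  refine (norm_add_le _ _).trans ?_
  rw [norm_mul, norm_I, mul_one, Complex.norm_real, Complex.norm_real, Real.norm_eq_abs,
    Real.norm_eq_abs, abs_of_nonpos (by linarith [Real.cos_le_one θ])]
  linarith [Real.one_sub_sq_div_two_le_cos (x := θ), Real.abs_sub_sin_le θ]

noncomputable def dirichletCorrection (θ : ℝ) : ℂ := 1 / (1 - exp (-θ * I)) - 1 / (θ * I)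

lemma norm_dirichletCorrection_le {θ : ℝ} (hθ₀ : θ ≠ 0) (hθ : |θ| < 2 * π) :
    ‖dirichletCorrection θ‖ ≤ 2 * π ^ 2 / (2 * π - |θ|) := by
  have hπ := Real.pi_pos
  have habs := abs_pos.2 hθ₀
  have hq : 1 - exp (-θ * I) ≠ 0 := sub_ne_zero.2 (exp_neg_mul_I_ne_one hθ₀ hθ).symm
  have hz : (θ : ℂ) * I ≠ 0 := mul_ne_zero (ofReal_ne_zero.2 hθ₀) I_ne_zero
  have hnum : ‖exp (-θ * I) - 1 + θ * I‖ ≤ 2 * |θ| ^ 2 := by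
    have hTaylor := norm_exp_neg_mul_I_sub_one_add_le θ
    have hcube : |θ| ^ 3 ≤ 9 * |θ| ^ 2 := by
      have : |θ| ≤ 9 := by linarith [Real.pi_lt_four]
      nlinarith [sq_nonneg |θ|]
    rw [← sq_abs θ] at hTaylor
    linarith
  have hden := abs_mul_two_pi_sub_abs_div_sq_le_norm_one_sub_exp hθ.le
  have hden₀ : 0 < |θ| * (2 * π - |θ|) / π ^ 2 :=
    div_pos (mul_pos habs (by linarith)) (by positivity)
  calc ‖dirichletCorrection θ‖
      = ‖exp (-θ * I) - 1 + θ * I‖ / (|θ| * ‖1 - exp (-θ * I)‖) := by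
        rw [dirichletCorrection, div_sub_div _ _ hq hz, norm_div, norm_mul (1 - _), norm_mul,
          norm_I, mul_one, norm_real, Real.norm_eq_abs]
        congr 1 <;> ring_nf
    _ ≤ 2 * |θ| ^ 2 / (|θ| * (|θ| * (2 * π - |θ|) / π ^ 2)) := by gcongr
    _ = 2 * π ^ 2 / (2 * π - |θ|) := by field_simp

noncomputable def avgExpSum (M : ℕ) (θ : ℝ) : ℂ := (M : ℂ)⁻¹ * ∑ n ∈ range M, exp (-(n * θ) * I)

lemma avgExpSum_eq {M : ℕ} (hM : M ≠ 0) {θ : ℝ} (hθ₀ : θ ≠ 0) (hθ : |θ| < 2 * π) :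
    avgExpSum M θ = (1 - exp (-(M * θ) * I)) * (1 / (M * θ * I) + dirichletCorrection θ / M) := by
  have hq := exp_neg_mul_I_ne_one hθ₀ hθ
  have hpow (n : ℕ) : exp (-(n * θ) * I) = exp (-θ * I) ^ n := by
    rw [← exp_nat_mul]; ring_nf
  have hq' : 1 - exp (-θ * I) ≠ 0 := sub_ne_zero.2 hq.symm
  simp only [avgExpSum, dirichletCorrection, hpow, geom_sum_eq hq]
  rw [← neg_div_neg_eq, neg_sub, neg_sub]
  field_simp
  ring

lemma avgExpSum_zero {M : ℕ} (hM : M ≠ 0) : avgExpSum M 0 = 1 := by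
  simp [avgExpSum, hM]

lemma norm_avgExpSum_sub_avgExpSum_le {M₁ M₂ : ℕ} (hM₁ : M₁ ≠ 0) (hM₂ : M₂ ≠ 0) {θ₁ θ₂ : ℝ}
    (hθ₁₀ : θ₁ ≠ 0) (hθ₁ : |θ₁| < 2 * π) (hθ₂₀ : θ₂ ≠ 0) (hθ₂ : |θ₂| < 2 * π)
    (h : M₁ * θ₁ = M₂ * θ₂) :
    ‖avgExpSum M₁ θ₁ - avgExpSum M₂ θ₂‖ ≤
      2 * (‖dirichletCorrection θ₁‖ / M₁ + ‖dirichletCorrection θ₂‖ / M₂) := by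
  have hC : ((M₁ * θ₁ : ℝ) : ℂ) = M₂ * θ₂ := by exact_mod_cast h
  push_cast at hC
  have hdiff : avgExpSum M₁ θ₁ - avgExpSum M₂ θ₂ = (1 - exp (-(M₁ * θ₁) * I)) *
      (dirichletCorrection θ₁ / M₁ - dirichletCorrection θ₂ / M₂) := by
    rw [avgExpSum_eq hM₁ hθ₁₀ hθ₁, avgExpSum_eq hM₂ hθ₂₀ hθ₂, hC]
    ring
  have hphase : ‖1 - exp (-(M₁ * θ₁) * I)‖ ≤ 2 := by
    refine (norm_sub_le _ _).trans ?_
    rw [norm_one, show -((M₁ : ℂ) * θ₁) * I = ((-(M₁ * θ₁) : ℝ) : ℂ) * I by push_cast; ring,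
      norm_exp_ofReal_mul_I]
    norm_num
  rw [hdiff, norm_mul]
  refine mul_le_mul hphase ((norm_sub_le _ _).trans_eq ?_) (norm_nonneg _) zero_le_two
  simp only [norm_div, Complex.norm_natCast]

lemma norm_dirichletCorrection_le_of_abs_le {θ x : ℝ} (hθ₀ : θ ≠ 0) (hθx : |θ| ≤ π * |x|)
    (hx : |x| < 2) : ‖dirichletCorrection θ‖ ≤ 2 * π / (2 - |x|) := by
  have hπ := Real.pi_pos
  have hθ : |θ| < 2 * π := by nlinarith
  calc ‖dirichletCorrection θ‖ ≤ 2 * π ^ 2 / (2 * π - |θ|) := norm_dirichletCorrection_le hθ₀ hθ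
    _ ≤ 2 * π ^ 2 / (π * (2 - |x|)) := by
        gcongr
        linarith
    _ = 2 * π / (2 - |x|) := by field_simp

lemma fHalf_eq_avgExpSum (L : ℕ) (x : ℝ) : fHalf L x = avgExpSum (2 * L) (π * x) := by
  simp only [fHalf, avgExpSum]
  push_cast
  congr 1
  · ring
  · refine sum_congr rfl fun n _ => ?_
    ring_nf

lemma fLD_eq_avgExpSum {L : ℕ} (hL : L ≠ 0) (N : ℕ) (x : ℝ) :
    fLD L N x = avgExpSum N (2 * π * (L / N) * x) := by
  simp only [fLD, avgExpSum]
  push_cast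
  congr 1
  · field_simp
  · refine sum_congr rfl fun n _ => ?_
    ring_nf

lemma norm_fHalf_sub_fLD_le {L N : ℕ} (hL : 0 < L) (hN : 0 < N) (hΔ : (L : ℝ) / N ≤ 1 / 2)
    {x : ℝ} (hx : |x| < 2) : ‖fHalf L x - fLD L N x‖ ≤ 4 * π / (L * (2 - |x|)) := by
  have hπ := Real.pi_pos
  have hLR : (0 : ℝ) < L := Nat.cast_pos.2 hL
  have hNR : (0 : ℝ) < N := Nat.cast_pos.2 hN
  have h2LN : 2 * (L : ℝ) ≤ N := by rw [div_le_iff₀ hNR] at hΔ; linarith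
  rw [fHalf_eq_avgExpSum, fLD_eq_avgExpSum hL.ne']
  rcases eq_or_ne x 0 with rfl | hx₀
  · rw [mul_zero, mul_zero, avgExpSum_zero (by positivity), avgExpSum_zero hN.ne', sub_self,
      norm_zero]
    positivity
  have hπx : π * |x| < 2 * π := by nlinarith
  have hθ₁ : |π * x| ≤ π * |x| := by rw [abs_mul, abs_of_pos hπ]
  have hθ₂ : |2 * π * (L / N) * x| ≤ π * |x| := by
    rw [abs_mul, abs_of_pos (by positivity)]
    gcongr
    rw [mul_assoc]
    nlinarith
  have hθ₁₀ : π * x ≠ 0 := mul_ne_zero hπ.ne' hx₀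
  have hθ₂₀ : 2 * π * (L / N) * x ≠ 0 := by positivity
  have hphase : ((2 * L : ℕ) : ℝ) * (π * x) = N * (2 * π * (L / N) * x) := by
    push_cast
    field_simp
  have hB := norm_dirichletCorrection_le_of_abs_le hθ₁₀ hθ₁ hx
  have hB' := norm_dirichletCorrection_le_of_abs_le hθ₂₀ hθ₂ hx
  calc _ ≤ 2 * (‖dirichletCorrection (π * x)‖ / ((2 * L : ℕ) : ℝ)
          + ‖dirichletCorrection (2 * π * (L / N) * x)‖ / N) :=
        norm_avgExpSum_sub_avgExpSum_le (by positivity) hN.ne' hθ₁₀ (by linarith) hθ₂₀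
          (by linarith) hphase
    _ ≤ 2 * (2 * π / (2 - |x|) / (2 * L) + 2 * π / (2 - |x|) / (2 * L)) := by
        push_cast
        gcongr
    _ = 4 * π / (L * (2 - |x|)) := by field_simp; ring

end ArrayFactor

/-- There is a constant `A > 0` such that for all positive
integers `L, N` with `Δ = L/N ∈ (0, 1/2]`, every `0 ≤ k ≤ L`, and every
`Ω ∈ [-1,1]` with `|k − LΩ| < 2L`:
`|f_{L,1/2}(k/L − Ω) − f_{L,Δ}(k/L − Ω)|² < 1/(4L²) + A/(2L − |k − LΩ|)²`. -/
theorem Dk_bound :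
    ∃ A > (0 : ℝ), ∀ L N : ℕ, 0 < L → 0 < N →
      0 < (L : ℝ) / N → (L : ℝ) / N ≤ 1 / 2 →
      ∀ k : ℕ, k ≤ L → ∀ Ω ∈ Set.Icc (-1 : ℝ) 1,
        |(k : ℝ) - (L : ℝ) * Ω| < 2 * (L : ℝ) →
        ‖fHalf L ((k : ℝ) / L - Ω) - fLD L N ((k : ℝ) / L - Ω)‖ ^ 2 <
          1 / (4 * (L : ℝ) ^ 2) + A / (2 * (L : ℝ) - |(k : ℝ) - (L : ℝ) * Ω|) ^ 2 := by
  refine ⟨(4 * Real.pi) ^ 2, by positivity, fun L N hL hN _ hΔ k _ Ω _ hkΩ => ?_⟩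
  have hLR : (0 : ℝ) < L := Nat.cast_pos.2 hL
  have hscale : |(k : ℝ) - L * Ω| = L * |(k : ℝ) / L - Ω| := by
    rw [← abs_of_pos hLR, ← abs_mul, abs_of_pos hLR, mul_sub, mul_div_cancel₀ _ hLR.ne']
  rw [hscale] at hkΩ ⊢
  have hx : |(k : ℝ) / L - Ω| < 2 := by nlinarith
  have hbound := ArrayFactor.norm_fHalf_sub_fLD_le hL hN hΔ hx
  rw [show 2 * (L : ℝ) - L * |(k : ℝ) / L - Ω| = L * (2 - |(k : ℝ) / L - Ω|) by ring]
  calc _ ≤ (4 * Real.pi / (L * (2 - |(k : ℝ) / L - Ω|))) ^ 2 := by gcongr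
    _ = (4 * Real.pi) ^ 2 / (L * (2 - |(k : ℝ) / L - Ω|)) ^ 2 := div_pow _ _ _
    _ < _ := lt_add_of_pos_left _ (by positivity)
end
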